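/- arXiv:1502.05277 — 2 statements merged into one kernel-verified Lean document; each statement's English description precedes it below -/
import Mathlib

section
/- Let G be a finite simple graph, let v be a vertex of G, and let H be the graph obtained from G by the star-clique transform at v, that is, H has vertex set V(G) \ {v}, and two distinct vertices u, w are adjacent in H if and only if they are adjacent in G or both u and w are neighbors of v in G. Then there exists a td(G)-ranking of G in which v is the unique vertex with label 1 if and only if td(H) < td(G). -/
/-- A `k`-ranking of a simple graph `G`: a labeling of the vertices with values from
`{1, …, k}` such that every path joining two distinct vertices with the same label
contains a vertex with a strictly higher label. -/
def IsRanking {V : Type*} (G : SimpleGraph V) (k : ℕ) (f : V → ℕ) : Prop :=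
  (∀ v, 1 ≤ f v ∧ f v ≤ k) ∧
  ∀ ⦃u v : V⦄ (p : G.Walk u v), p.IsPath → u ≠ v → f u = f v →
    ∃ w ∈ p.support, f u < f w

/-- The tree-depth of `G`: the least `k` such that `G` admits a `k`-ranking. -/
noncomputable def treedepth {V : Type*} (G : SimpleGraph V) : ℕ :=
  sInf {k | ∃ f, IsRanking G k f}

/-- The star-clique transform of `G` at `v`: delete `v`, and make two remaining distinct
vertices adjacent iff they were adjacent in `G` or both were neighbors of `v`. -/
def starClique {V : Type*} (G : SimpleGraph V) (v : V) :
    SimpleGraph {w : V // w ≠ v} where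
  Adj u w := u ≠ w ∧ (G.Adj u.1 w.1 ∨ (G.Adj v u.1 ∧ G.Adj v w.1))
  symm := by
    constructor
    rintro u w ⟨hne, h | ⟨h1, h2⟩⟩
    · exact ⟨hne.symm, Or.inl h.symm⟩
    · exact ⟨hne.symm, Or.inr ⟨h2, h1⟩⟩
  loopless := ⟨fun u h => h.1 rfl⟩

/-! If `v` is the only vertex labelled `1`, a path of `starClique G v` lifts to a walk of `G`
whose only new vertex is `v`, so it still meets a label above its equal endpoints; deleting `v`
and lowering every label by one thus ranks `starClique G v` with `treedepth G - 1` labels.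
Conversely, raise a ranking of `starClique G v` by one and give `v` the label `1`: a path of `G`
between two equally labelled vertices avoids the label `1` at its ends, and shortcutting its
passage through `v` by an edge of the clique on the neighbours of `v` gives a walk of
`starClique G v` on a subset of its vertices. -/

namespace starClique

variable {V : Type*} {G : SimpleGraph V} {v : V}

theorem adj_of_adj {a b : V} (ha : a ≠ v) (hb : b ≠ v) (h : G.Adj a b) :
    (starClique G v).Adj ⟨a, ha⟩ ⟨b, hb⟩ :=
  ⟨fun hab => h.ne (congrArg Subtype.val hab), .inl h⟩

theorem adj_of_center_adj {a b : V} (ha : G.Adj v a) (hb : G.Adj v b) (hab : a ≠ b) :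
    (starClique G v).Adj ⟨a, ha.ne'⟩ ⟨b, hb.ne'⟩ :=
  ⟨fun h => hab (congrArg Subtype.val h), .inr ⟨ha, hb⟩⟩

theorem exists_walk_support_subset {u w : {x : V // x ≠ v}} (P : (starClique G v).Walk u w) :
    ∃ W : G.Walk u.1 w.1, W.support ⊆ v :: P.support.map Subtype.val := by
  induction P with
  | nil => exact ⟨.nil, by simp⟩
  | cons h P ih =>
    obtain ⟨W, hW⟩ := ih
    obtain ⟨-, hadj | ⟨hu, hw⟩⟩ := h
    · refine ⟨.cons hadj W, ?_⟩
      simp only [SimpleGraph.Walk.support_cons]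
      grind
    · refine ⟨.cons hu.symm (.cons hw W), ?_⟩
      simp only [SimpleGraph.Walk.support_cons]
      grind

theorem exists_walk_of_walk : ∀ {a b : V} (ha : a ≠ v) (hb : b ≠ v) (p : G.Walk a b),
    ∃ q : (starClique G v).Walk ⟨a, ha⟩ ⟨b, hb⟩, q.support.map Subtype.val ⊆ p.support
  | _, _, _, _, .nil => ⟨.nil, by simp⟩
  | _, _, ha, hb, .cons hab .nil => ⟨.cons (adj_of_adj ha hb hab) .nil, by simp⟩
  | a, _, ha, hb, .cons (v := c) hac (.cons (v := d) hcd p) => by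
    by_cases hc : c = v
    · subst c
      obtain ⟨q, hq⟩ := exists_walk_of_walk hcd.ne' hb p
      by_cases had : a = d
      · subst had
        exact ⟨q, by simp only [SimpleGraph.Walk.support_cons]; grind⟩
      · refine ⟨.cons (adj_of_center_adj hac.symm hcd had) q, ?_⟩
        simp only [SimpleGraph.Walk.support_cons]
        grind
    · obtain ⟨q, hq⟩ := exists_walk_of_walk hc hb (.cons hcd p)
      refine ⟨.cons (adj_of_adj ha hc hac) q, ?_⟩
      simp only [SimpleGraph.Walk.support_cons] at hq ⊢
      grind

end starClique

section Ranking

variable {V : Type*} {G : SimpleGraph V} {k : ℕ} {f : V → ℕ}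

theorem IsRanking.mono {k' : ℕ} (hf : IsRanking G k f) (hk : k ≤ k') : IsRanking G k' f :=
  ⟨fun x => ⟨(hf.1 x).1, (hf.1 x).2.trans hk⟩, hf.2⟩

theorem IsRanking.exists_lt_of_walk (hf : IsRanking G k f) {u w : V} (p : G.Walk u w)
    (huw : u ≠ w) (hf_eq : f u = f w) : ∃ x ∈ p.support, f u < f x := by
  classical
  obtain ⟨x, hx, hlt⟩ := hf.2 p.bypass p.bypass_isPath huw hf_eq
  exact ⟨x, p.support_bypass_subset_support hx, hlt⟩

theorem isRanking_of_injective (hf : f.Injective) (hk : ∀ x, 1 ≤ f x ∧ f x ≤ k) :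
    IsRanking G k f :=
  ⟨hk, fun _ _ _ _ huw hf_eq => absurd (hf hf_eq) huw⟩

theorem exists_isRanking [Finite V] (G : SimpleGraph V) : ∃ k f, IsRanking G k f := by
  obtain ⟨n, ⟨e⟩⟩ := Finite.exists_equiv_fin V
  refine ⟨n, fun x => e x + 1, isRanking_of_injective ?_ fun x => ⟨by omega, (e x).isLt⟩⟩
  intro x y h
  exact e.injective (Fin.ext (by simpa using h))

theorem exists_isRanking_treedepth [Finite V] (G : SimpleGraph V) :
    ∃ f, IsRanking G (treedepth G) f :=
  Nat.sInf_mem (exists_isRanking G)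

theorem treedepth_le (hf : IsRanking G k f) : treedepth G ≤ k :=
  Nat.sInf_le ⟨f, hf⟩

end Ranking

section StarClique

variable {V : Type*} {G : SimpleGraph V} {v : V} {k : ℕ}

theorem IsRanking.starClique_sub_one {f : V → ℕ} (hf : IsRanking G k f)
    (hv : ∀ w, w ≠ v → f v < f w) :
    IsRanking (starClique G v) (k - 1) (fun x => f x.1 - 1) := by
  have hf2 (x : {w // w ≠ v}) : 2 ≤ f x.1 := by have := (hf.1 v).1; have := hv x.1 x.2; omega
  refine ⟨fun x => ?_, fun u w P _ huw hg_eq => ?_⟩ <;> dsimp only at *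
  · have := hf2 x; have := (hf.1 x.1).2; omega
  obtain ⟨W, hW⟩ := starClique.exists_walk_support_subset P
  have hf_eq : f u.1 = f w.1 := by have := hf2 u; have := hf2 w; omega
  obtain ⟨x, hx, hlt⟩ := hf.exists_lt_of_walk W (fun h => huw (Subtype.ext h)) hf_eq
  obtain rfl | ⟨y, hy, rfl⟩ := List.mem_cons.1 (hW hx) |>.imp id List.mem_map.1
  · exact absurd (hv u.1 u.2) (by omega)
  · exact ⟨y, hy, by have := hf2 u; omega⟩

def insertBottom [DecidableEq V] (v : V) (g : {w // w ≠ v} → ℕ) (x : V) : ℕ :=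
  if h : x = v then 1 else g ⟨x, h⟩ + 1

@[simp] theorem insertBottom_self [DecidableEq V] (g : {w // w ≠ v} → ℕ) :
    insertBottom v g v = 1 := by
  simp [insertBottom]

theorem insertBottom_of_ne [DecidableEq V] (g : {w // w ≠ v} → ℕ) {x : V} (hx : x ≠ v) :
    insertBottom v g x = g ⟨x, hx⟩ + 1 := by
  simp [insertBottom, hx]

theorem IsRanking.insertBottom_of_starClique [DecidableEq V] {g : {w // w ≠ v} → ℕ}
    (hg : IsRanking (starClique G v) k g) : IsRanking G (k + 1) (insertBottom v g) := by
  have hne_one {x : V} (hx : x ≠ v) : insertBottom v g x ≠ 1 := by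
    have := (hg.1 ⟨x, hx⟩).1; rw [insertBottom_of_ne g hx]; omega
  refine ⟨fun x => ?_, fun u w p _ huw hf_eq => ?_⟩
  · by_cases hx : x = v
    · simp [hx]
    · have := (hg.1 ⟨x, hx⟩).2; rw [insertBottom_of_ne g hx]; omega
  have hu : u ≠ v := by
    rintro rfl
    exact hne_one (Ne.symm huw) (by simpa using hf_eq.symm)
  have hw : w ≠ v := by
    rintro rfl
    exact hne_one hu (by simpa using hf_eq)
  obtain ⟨q, hq⟩ := starClique.exists_walk_of_walk hu hw p
  rw [insertBottom_of_ne g hu, insertBottom_of_ne g hw] at hf_eq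
  obtain ⟨⟨y, hyv⟩, hy, hlt⟩ :=
    hg.exists_lt_of_walk q (fun h => huw (congrArg Subtype.val h)) (by omega)
  refine ⟨y, hq (List.mem_map_of_mem hy), ?_⟩
  rw [insertBottom_of_ne g hu, insertBottom_of_ne g hyv]
  omega

end StarClique

/-- `v` is 1-unique in `G` iff the star-clique transform at `v` lowers the tree-depth. -/
theorem oneUnique_iff_starClique_lt {V : Type*} [Fintype V] (G : SimpleGraph V) (v : V) :
    (∃ f : V → ℕ, IsRanking G (treedepth G) f ∧ f v = 1 ∧ ∀ w, f w = 1 → w = v) ↔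
      treedepth (starClique G v) < treedepth G := by
  classical
  constructor
  · rintro ⟨f, hf, hfv, hunique⟩
    have hv : ∀ w, w ≠ v → f v < f w := fun w hw => by
      have := (hf.1 w).1; have := mt (hunique w) hw; omega
    have := treedepth_le (hf.starClique_sub_one hv)
    have := (hf.1 v).2
    omega
  · intro hlt
    obtain ⟨g, hg⟩ := exists_isRanking_treedepth (starClique G v)
    refine ⟨insertBottom v g, hg.insertBottom_of_starClique.mono hlt, insertBottom_self g,
      fun w hw => by_contra fun hwv => ?_⟩
    have := (hg.1 ⟨w, hwv⟩).1
    rw [insertBottom_of_ne g hwv] at hw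
    omega
end

section
/- For all integers k ≥ 3 and t with 0 ≤ t ≤ 2^{k−2} − 2, and for every vertex x of R_{k,t}, the graph R_{k,t} − x obtained by deleting x has tree-depth exactly k − 1. -/
/-- The graph `R_{k,t}`: a path `v_1, …, v_{2^{k-2}+1+t}` (vertex `v_i` is index `i - 1`
in `Fin (2^(k-2)+1+t)`) together with an added edge between `v_{t+1}` (index `t`) and
`v_{2^{k-2}+1}` (index `2^(k-2)`). -/
def Rgraph (k t : ℕ) : SimpleGraph (Fin (2 ^ (k - 2) + 1 + t)) :=
  SimpleGraph.fromRel (fun i j =>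
    i.val + 1 = j.val ∨ (i.val = t ∧ j.val = 2 ^ (k - 2)))

open SimpleGraph Function

section General

variable {V : Type*} {G : SimpleGraph V} {K : ℕ} {f : V → ℕ}

theorem treedepth_eq_of_isRanking (hf : IsRanking G K f)
    (hmin : ∀ K' g, IsRanking G K' g → K ≤ K') : treedepth G = K :=
  le_antisymm (Nat.sInf_le ⟨f, hf⟩) (le_csInf ⟨K, f, hf⟩ fun K' ⟨g, hg⟩ => hmin K' g hg)

namespace IsRanking

theorem exists_lt_of_walk_s13 (hf : IsRanking G K f) {u v : V} (p : G.Walk u v) (huv : u ≠ v)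
    (hfuv : f u = f v) : ∃ w ∈ p.support, f u < f w := by
  classical
  obtain ⟨w, hw, hlt⟩ := hf.2 p.bypass p.bypass_isPath huv hfuv
  exact ⟨w, p.support_bypass_subset_support hw, hlt⟩

theorem exists_forall_le_of_connected [Finite V] (hf : IsRanking G K f) {S : Set V} {j : ℕ}
    (hS : (G.induce S).Connected) (hj : ∀ v ∈ S, f v ≤ j + 1) :
    ∃ p ∈ S, ∀ v ∈ S, v ≠ p → f v ≤ j := by
  obtain ⟨⟨v₀, hv₀⟩⟩ := hS.nonempty
  obtain ⟨p, hpS, hmax⟩ := S.exists_max_image f S.toFinite ⟨v₀, hv₀⟩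
  refine ⟨p, hpS, fun v hvS hvp => ?_⟩
  by_contra! hv
  have hfv : f v = f p := le_antisymm (hmax v hvS) (by have := hj p hpS; omega)
  obtain ⟨q⟩ := hS.preconnected ⟨v, hvS⟩ ⟨p, hpS⟩
  obtain ⟨w, hw, hlt⟩ := hf.exists_lt_of_walk_s13 (q.map (Embedding.induce S).toHom) hvp hfv
  rw [Walk.support_map, List.mem_map] at hw
  obtain ⟨w, -, rfl⟩ := hw
  have : f v < f w := hlt
  exact absurd (hmax w w.2) (by omega)

end IsRanking

theorem isRanking_of_induce_ne [DecidableEq V] {x : V} {g : {w | w ≠ x} → ℕ}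
    (hg : IsRanking (G.induce {w | w ≠ x}) K g) :
    IsRanking G (K + 1) (fun v => if h : v = x then K + 1 else g ⟨v, h⟩) := by
  refine ⟨fun v => ?_, fun u v p _ huv hfuv => ?_⟩ <;> dsimp only at *
  · split_ifs with h
    · omega
    · have := hg.1 ⟨v, h⟩; omega
  by_cases hxp : x ∈ p.support
  · refine ⟨x, hxp, ?_⟩
    by_cases hux : u = x
    · subst hux
      have hvx : v ≠ u := huv.symm
      have := (hg.1 ⟨v, hvx⟩).2
      simp only [dif_pos, dif_neg hvx] at hfuv
      omega
    · have := (hg.1 ⟨u, hux⟩).2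
      simp only [dif_pos, dif_neg hux]
      omega
  · have hs : ∀ w ∈ p.support, w ∈ {w | w ≠ x} := fun w hw h => hxp (h ▸ hw)
    have hux := hs u p.start_mem_support
    have hvx := hs v p.end_mem_support
    simp only [Set.mem_ofPred_eq] at hux hvx
    obtain ⟨w, hw, hlt⟩ := hg.exists_lt_of_walk_s13 (p.induce _ hs)
      (fun h => huv (congrArg Subtype.val h)) (by simpa [hux, hvx] using hfuv)
    rw [Walk.support_induce, List.mem_attachWith] at hw
    refine ⟨w, hw, ?_⟩
    simpa [hux, dif_neg w.2] using hlt

theorem exists_between_padicValNat_two_lt {a b : ℕ} (ha : 0 < a) (hab : a < b)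
    (h : padicValNat 2 a = padicValNat 2 b) :
    ∃ c, a < c ∧ c < b ∧ padicValNat 2 a < padicValNat 2 c := by
  have hval : ∀ e u, Odd u → padicValNat 2 (2 ^ e * u) = e := fun e u hu => by
    rw [padicValNat.mul (by positivity) hu.pos.ne', padicValNat.prime_pow,
      padicValNat.eq_zero_of_not_dvd hu.not_two_dvd_nat, add_zero]
  obtain ⟨e, u, hu, rfl⟩ := Nat.exists_eq_two_pow_mul_odd ha.ne'
  obtain ⟨e', w, hw, rfl⟩ := Nat.exists_eq_two_pow_mul_odd (by omega : b ≠ 0)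
  rw [hval e u hu, hval e' w hw] at h
  subst h
  rw [hval e u hu]
  have huw : u < w := Nat.lt_of_mul_lt_mul_left hab
  obtain ⟨i, rfl⟩ := hu
  obtain ⟨i', rfl⟩ := hw
  -- `a`, `b` are distinct odd multiples of `2 ^ e`; the even multiple just above `a` is below `b`
  refine ⟨2 ^ e * (2 * i + 2), (Nat.mul_lt_mul_left (by positivity)).2 (by omega),
    (Nat.mul_lt_mul_left (by positivity)).2 (by omega), ?_⟩
  exact (padicValNat_dvd_iff_le (by positivity)).1 ⟨i + 1, by rw [pow_succ]; ring⟩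

theorem padicValNat_two_lt_of_lt_of_lt {q c : ℕ} (h₁ : 2 ^ K * q < c)
    (h₂ : c < 2 ^ K * (q + 1)) : padicValNat 2 c < K := by
  by_contra! h
  have hc : c ≠ 0 := ((Nat.zero_le _).trans_lt h₁).ne'
  exact Nat.not_dvd_of_lt_of_lt_mul_succ h₁ h₂ ((padicValNat_dvd_iff_le hc).2 h)

theorem SimpleGraph.Walk.exists_mem_support_eq {φ : V → ℕ}
    (hφ : ∀ a b, G.Adj a b → φ b ≤ φ a + 1) {u v : V} (p : G.Walk u v) {c : ℕ}
    (huc : φ u ≤ c) (hcv : c ≤ φ v) : ∃ w ∈ p.support, φ w = c := by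
  induction p with
  | nil => exact ⟨_, Walk.start_mem_support _, by omega⟩
  | cons h q ih =>
    rcases huc.eq_or_lt with rfl | hlt
    · exact ⟨_, Walk.start_mem_support _, rfl⟩
    · obtain ⟨w, hw, rfl⟩ := ih (by have := hφ _ _ h; omega) hcv
      exact ⟨w, by simp [hw], rfl⟩

theorem isRanking_padicValNat_two {φ : V → ℕ} (hinj : Injective φ) (hpos : ∀ v, 0 < φ v)
    (hφ : ∀ a b, G.Adj a b → φ b ≤ φ a + 1) (hK : ∀ v, padicValNat 2 (φ v) < K) :
    IsRanking G K (fun v => padicValNat 2 (φ v) + 1) := by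
  refine ⟨fun v => ⟨Nat.le_add_left _ _, hK v⟩, fun u v p _ huv hfuv => ?_⟩
  dsimp only at hfuv ⊢
  have key : ∀ {a b : V} (q : G.Walk a b), φ a < φ b →
      padicValNat 2 (φ a) = padicValNat 2 (φ b) →
      ∃ w ∈ q.support, padicValNat 2 (φ a) + 1 < padicValNat 2 (φ w) + 1 := by
    intro a b q hab h
    obtain ⟨c, hac, hcb, hc⟩ := exists_between_padicValNat_two_lt (hpos a) hab h
    obtain ⟨w, hw, rfl⟩ := q.exists_mem_support_eq hφ hac.le hcb.le
    exact ⟨w, hw, by omega⟩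
  simp only [add_left_inj] at hfuv
  rcases (hinj.ne huv).lt_or_gt with hlt | hlt
  · exact key p hlt hfuv
  · obtain ⟨w, hw, hlt'⟩ := key p.reverse hlt hfuv.symm
    exact ⟨w, by simpa using hw, by omega⟩

/-- A graph laid injectively along `ℕ`, with edges only between consecutive positions and no
vertex at the two positions `lo` and `hi`, splits into three runs of positions; if each run has
fewer than `2 ^ K` vertices, the graph has a `K`-ranking. -/
theorem exists_isRanking_of_injective_of_ne {lo hi : ℕ} (pos : V → ℕ) (hinj : Injective pos)
    (hadj : ∀ u v, G.Adj u v → pos u + 1 = pos v ∨ pos v + 1 = pos u)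
    (hgap : ∀ v, pos v ≠ lo ∧ pos v ≠ hi) (hlo : lo < 2 ^ K) (hhi : hi ≤ lo + 2 ^ K)
    (hlast : ∀ v, pos v < hi + 2 ^ K) : ∃ f, IsRanking G K f := by
  -- move the three runs into `(0, 2^K)`, `(2^K, 2 * 2^K)` and `(2 * 2^K, 3 * 2^K)`
  set φ : V → ℕ := fun v =>
    if pos v < lo then pos v + 1 else if pos v < hi then pos v - lo + 2 ^ K
    else pos v - hi + 2 * 2 ^ K
  refine ⟨_, isRanking_padicValNat_two (φ := φ) (fun u v h => hinj ?_) (fun v => ?_)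
    (fun u v h => ?_) (fun v => ?_)⟩
  · have := hgap u; have := hgap v
    simp only [φ] at h
    split_ifs at h <;> omega
  · simp only [φ]
    split_ifs <;> omega
  · have := hgap u; have := hgap v; have := hadj u v h
    simp only [φ]
    split_ifs <;> omega
  · have := hgap v; have := hlast v
    simp only [φ]
    split_ifs
    · exact padicValNat_two_lt_of_lt_of_lt (q := 0) (by omega) (by omega)
    · exact padicValNat_two_lt_of_lt_of_lt (q := 1) (by omega) (by omega)
    · exact padicValNat_two_lt_of_lt_of_lt (q := 2) (by omega) (by omega)

end General

def chordedPath (n t m : ℕ) : SimpleGraph (Fin n) :=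
  fromRel (fun i j => i.val + 1 = j.val ∨ (i.val = t ∧ j.val = m))

theorem Rgraph_eq_chordedPath (k t : ℕ) :
    Rgraph k t = chordedPath (2 ^ (k - 2) + 1 + t) t (2 ^ (k - 2)) := rfl

namespace chordedPath

variable {n t m K : ℕ} {f : Fin n → ℕ}

theorem adj_of_succ {i j : Fin n} (h : i.val + 1 = j.val) : (chordedPath n t m).Adj i j :=
  fromRel_adj _ _ _ |>.2 ⟨fun hij => by subst hij; omega, .inl (.inl h)⟩

theorem adj_chord (htm : t ≠ m) {i j : Fin n} (hi : i.val = t) (hj : j.val = m) :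
    (chordedPath n t m).Adj i j :=
  fromRel_adj _ _ _ |>.2 ⟨fun hij => by subst hij; omega, .inl (.inr ⟨hi, hj⟩)⟩

theorem exists_walk_of_le {i j : Fin n} (hij : i ≤ j) :
    ∃ p : (chordedPath n t m).Walk i j, ∀ w ∈ p.support, i ≤ w ∧ w ≤ j := by
  obtain ⟨d, hd⟩ : ∃ d, j.val = i.val + d := ⟨j.val - i.val, by omega⟩
  induction d generalizing j with
  | zero =>
    obtain rfl : i = j := Fin.ext (by omega)
    exact ⟨.nil, by simp⟩
  | succ d ih =>
    obtain ⟨p, hp⟩ := ih (j := ⟨i.val + d, by omega⟩) (Fin.le_def.2 (by simp)) rfl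
    refine ⟨p.concat (adj_of_succ (by simp only; omega)), fun w hw => ?_⟩
    rw [Walk.support_concat, List.mem_append, List.mem_singleton] at hw
    rcases hw with hw | rfl
    · have := hp w hw
      simp only [Fin.le_def] at this ⊢
      omega
    · exact ⟨hij, le_rfl⟩

theorem connected_induce_Ico {a b : ℕ} (hab : a < b) (hbn : b ≤ n) :
    ((chordedPath n t m).induce (Fin.val ⁻¹' Set.Ico a b)).Connected := by
  let i₀ : Fin n := ⟨a, by omega⟩
  have hi₀ : i₀ ∈ Fin.val ⁻¹' Set.Ico a b := by simp [i₀, hab]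
  refine (connected_iff_exists_forall_reachable _).2 ⟨⟨i₀, hi₀⟩, fun ⟨v, hv⟩ => ?_⟩
  simp only [Set.mem_preimage, Set.mem_Ico] at hv
  obtain ⟨p, hp⟩ := exists_walk_of_le (t := t) (m := m) (i := i₀) (j := v) (Fin.le_def.2 hv.1)
  refine ⟨p.induce _ fun w hw => ?_⟩
  have := hp w hw
  simp only [Fin.le_def, i₀] at this
  simp only [Set.mem_preimage, Set.mem_Ico]
  omega

theorem sub_lt_two_pow_of_isRanking (hf : IsRanking (chordedPath n t m) K f) {a b j : ℕ}
    (hbn : b ≤ n) (hj : ∀ i ∈ Fin.val ⁻¹' Set.Ico a b, f i ≤ j) : b - a < 2 ^ j := by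
  induction j generalizing a b with
  | zero =>
    by_contra! h
    have := hj ⟨a, by omega⟩ (by simp; omega)
    have := (hf.1 ⟨a, by omega⟩).1
    omega
  | succ j ih =>
    rcases le_or_gt b a with hba | hab
    · simp [Nat.sub_eq_zero_of_le hba]
    obtain ⟨p, hpS, hp⟩ := hf.exists_forall_le_of_connected (connected_induce_Ico hab hbn) hj
    simp only [Set.mem_preimage, Set.mem_Ico] at hpS hp
    have hl := ih (a := a) (b := p) (by omega) fun i hi => by
      simp only [Set.mem_preimage, Set.mem_Ico] at hi
      exact hp i (by omega) (fun h => by subst h; omega)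
    have hr := ih (a := p + 1) (b := b) hbn fun i hi => by
      simp only [Set.mem_preimage, Set.mem_Ico] at hi
      exact hp i (by omega) (fun h => by subst h; omega)
    rw [pow_succ]
    omega

theorem connected_induce_Ico_union_Ico {a b c d : ℕ} (hat : a ≤ t) (htb : t < b)
    (hcm : c ≤ m) (hmd : m < d) (hdn : d ≤ n) (hbc : b ≤ c) :
    ((chordedPath n t m).induce (Fin.val ⁻¹' (Set.Ico a b ∪ Set.Ico c d))).Connected := by
  rw [Set.preimage_union]
  exact connected_induce_union (connected_induce_Ico (by omega) (by omega)).preconnected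
    (connected_induce_Ico (by omega) hdn).preconnected
    (v := ⟨t, by omega⟩) (w := ⟨m, by omega⟩) (by simp [hat, htb]) (by simp [hcm, hmd])
    (adj_chord (by omega) rfl rfl)

/-- The bound for a "D-shape": the arcs `[t, b)` and `[c, m]` running from the chord towards each
other count fully, the outer tails `[a, t)` and `(m, d)` only through the shorter one. This is
the quantity that halves at most when the top vertex is removed. -/
theorem dShape_lt_two_pow_of_isRanking (hf : IsRanking (chordedPath n t m) K f)
    {a b c d j : ℕ} (hat : a ≤ t) (htb : t < b) (hbc : b < c) (hcm : c ≤ m) (hmd : m < d)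
    (hdn : d ≤ n) (hj : ∀ i ∈ Fin.val ⁻¹' (Set.Ico a b ∪ Set.Ico c d), f i ≤ j) :
    (b - t) + (m + 1 - c) + min (t - a) (d - (m + 1)) < 2 ^ j := by
  induction j generalizing a b c d with
  | zero =>
    have := hj ⟨t, by omega⟩ (by simp; omega)
    have := (hf.1 ⟨t, by omega⟩).1
    omega
  | succ j ih =>
    obtain ⟨p, hpS, hp⟩ := hf.exists_forall_le_of_connected
      (connected_induce_Ico_union_Ico hat htb hcm hmd hdn hbc.le) hj
    simp only [Set.mem_preimage, Set.mem_union, Set.mem_Ico] at hpS hp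
    have hp' : ∀ i : Fin n,
        (a ≤ i.val ∧ i.val < b ∨ c ≤ i.val ∧ i.val < d) ∧ i.val ≠ p.val → f i ≤ j :=
      fun i hi => hp i hi.1 (fun h => hi.2 (congrArg Fin.val h))
    have path {a' b' : ℕ} (hb' : b' ≤ n) (h : ∀ i : Fin n, a' ≤ i.val ∧ i.val < b' →
        (a ≤ i.val ∧ i.val < b ∨ c ≤ i.val ∧ i.val < d) ∧ i.val ≠ p.val) :
        b' - a' < 2 ^ j :=
      sub_lt_two_pow_of_isRanking hf hb' fun i hi => hp' i (h i (by simpa using hi))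
    rw [pow_succ]
    rcases hpS with ⟨hap, hpb⟩ | ⟨hcp, hpd⟩
    · rcases lt_trichotomy p.val t with hpt | hpt | hpt
      · have := path (a' := a) (b' := p) (by omega) (by omega)
        have := ih (a := p + 1) (b := b) (c := c) (d := d) (by omega) htb hbc hcm hmd hdn
          fun i hi => hp' i (by simp at hi; omega)
        omega
      · have := path (a' := t + 1) (b' := b) (by omega) (by omega)
        have := path (a' := c) (b' := d) hdn (by omega)
        omega
      · have := path (a' := p + 1) (b' := b) (by omega) (by omega)
        have := ih (a := a) (b := p) (c := c) (d := d) hat hpt (by omega) hcm hmd hdn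
          fun i hi => hp' i (by simp at hi; omega)
        omega
    · rcases lt_trichotomy p.val m with hpm | hpm | hpm
      · have := path (a' := c) (b' := p) (by omega) (by omega)
        have := ih (a := a) (b := b) (c := p + 1) (d := d) hat htb (by omega) hpm hmd hdn
          fun i hi => hp' i (by simp at hi; omega)
        omega
      · have := path (a' := a) (b' := b) (by omega) (by omega)
        have := path (a' := c) (b' := m) (by omega) (by omega)
        omega
      · have := path (a' := p + 1) (b' := d) hdn (by omega)
        have := ih (a := a) (b := b) (c := c) (d := p) hat htb hbc hcm hpm (by omega)
          fun i hi => hp' i (by simp at hi; omega)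
        omega

/-- Removing the top vertex leaves a path or a D-shape. -/
theorem two_mul_lt_two_pow_of_isRanking (hf : IsRanking (chordedPath n t m) K f) (htm : t < m)
    (hmn : m < n) : 2 * (m - t + min t (n - (m + 1))) < 2 ^ K := by
  cases K with
  | zero => have := hf.1 ⟨0, by omega⟩; omega
  | succ j =>
    obtain ⟨p, -, hp⟩ := hf.exists_forall_le_of_connected
      (connected_induce_Ico (a := 0) (by omega) le_rfl) fun v _ => (hf.1 v).2
    simp only [Set.mem_preimage, Set.mem_Ico, zero_le, true_and] at hp
    have hp' : ∀ i : Fin n, i.val ≠ p.val → f i ≤ j :=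
      fun i hi => hp i i.isLt (fun h => hi (congrArg Fin.val h))
    rw [pow_succ]
    rcases le_or_gt p.val t with hpt | hpt
    · have := sub_lt_two_pow_of_isRanking hf le_rfl (a := t + 1)
        fun i hi => hp' i (by simp at hi; omega)
      omega
    rcases le_or_gt m p.val with hpm | hpm
    · have := sub_lt_two_pow_of_isRanking hf hmn.le (a := 0) (b := m)
        fun i hi => hp' i (by simp at hi; omega)
      omega
    · have := dShape_lt_two_pow_of_isRanking hf (a := 0) (b := p) (c := p + 1) (d := n)
        (Nat.zero_le _) hpt (by omega) hpm hmn le_rfl fun i hi => hp' i (by simp at hi; omega)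
      omega

/-- Deleting `x` and an endpoint `s` of the chord leaves three runs of the path; if each is shorter
than `2 ^ K`, then `s` is the only vertex that needs a label above `K`. -/
theorem exists_isRanking_induce_ne {x s : Fin n} (hsx : s ≠ x) (hs : s.val = t ∨ s.val = m)
    (hlo : min x.val s.val < 2 ^ K) (hhi : max x.val s.val ≤ min x.val s.val + 2 ^ K)
    (hn : n ≤ max x.val s.val + 2 ^ K) :
    ∃ g, IsRanking ((chordedPath n t m).induce {w | w ≠ x}) (K + 1) g := by
  let s' : {w | w ≠ x} := ⟨s, hsx⟩
  have hval (v : {w | w ≠ s'}) : v.1.1.val ≠ x.val ∧ v.1.1.val ≠ s.val :=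
    ⟨fun h => v.1.2 (Fin.ext h), fun h => v.2 (Subtype.ext (Fin.ext h))⟩
  obtain ⟨g, hg⟩ := exists_isRanking_of_injective_of_ne
    (G := ((chordedPath n t m).induce {w | w ≠ x}).induce {w | w ≠ s'}) (fun v => v.1.1.val)
    (fun u v h => Subtype.ext (Subtype.ext (Fin.ext h)))
    (fun u v h => by
      have := hval u; have := hval v
      have h' : (chordedPath n t m).Adj u.1.1 v.1.1 := h
      simp only [chordedPath, fromRel_adj] at h'
      omega)
    (fun v => by have := hval v; omega) hlo hhi (fun v => by have := v.1.1.isLt; omega)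
  exact ⟨_, isRanking_of_induce_ne hg⟩

end chordedPath

theorem exists_isRanking_Rgraph_deleteVertex {k t : ℕ} (hk : 2 ≤ k) (ht : t ≤ 2 ^ (k - 2) - 2)
    (x : Fin (2 ^ (k - 2) + 1 + t)) :
    ∃ f, IsRanking ((Rgraph k t).induce {w | w ≠ x}) (k - 1) f := by
  have hM := Nat.one_le_two_pow (n := k - 2)
  rw [show k - 1 = k - 2 + 1 by omega, Rgraph_eq_chordedPath]
  by_cases hx : x.val < 2 ^ (k - 2)
  · exact chordedPath.exists_isRanking_induce_ne (s := ⟨2 ^ (k - 2), by omega⟩)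
      (Fin.ne_of_val_ne (by simp only; omega)) (.inr rfl) (by simp only; omega)
      (by simp only; omega) (by simp only; omega)
  · exact chordedPath.exists_isRanking_induce_ne (s := ⟨t, by omega⟩)
      (Fin.ne_of_val_ne (by simp only; omega)) (.inl rfl) (by simp only; omega)
      (by simp only; omega) (by simp only; omega)

theorem le_of_isRanking_Rgraph_deleteVertex {k t : ℕ} (hk : 2 ≤ k) (ht : t ≤ 2 ^ (k - 2) - 2)
    {x : Fin (2 ^ (k - 2) + 1 + t)} {K : ℕ} {g : {w | w ≠ x} → ℕ}
    (hg : IsRanking ((Rgraph k t).induce {w | w ≠ x}) K g) : k - 1 ≤ K := by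
  classical
  rw [Rgraph_eq_chordedPath] at hg
  have hM := Nat.one_le_two_pow (n := k - 2)
  have h := chordedPath.two_mul_lt_two_pow_of_isRanking (isRanking_of_induce_ne hg)
    (by omega) (by omega)
  rw [pow_succ] at h
  have : 2 ^ (k - 2) < 2 ^ K := by omega
  have := (Nat.pow_lt_pow_iff_right (by norm_num)).1 this
  omega

/-- For `k ≥ 3` and `0 ≤ t ≤ 2^(k-2) − 2`, deleting any vertex of `R_{k,t}` yields a
graph of tree-depth exactly `k − 1`. -/
theorem treedepth_Rgraph_deleteVertex (k t : ℕ) (hk : 3 ≤ k)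
    (ht : t ≤ 2 ^ (k - 2) - 2) (x : Fin (2 ^ (k - 2) + 1 + t)) :
    treedepth ((Rgraph k t).induce {w | w ≠ x}) = k - 1 := by
  obtain ⟨f, hf⟩ := exists_isRanking_Rgraph_deleteVertex (by omega) ht x
  exact treedepth_eq_of_isRanking hf fun _ _ hg =>
    le_of_isRanking_Rgraph_deleteVertex (by omega) ht hg
end
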